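/- For any CL10°-formula F, F is not provable in CL10° if and only if F is provable in the dual system CL10°-bar. -/
import Mathlib


/-- CL10-formulas: elementary-base CL9-formulas (no general atoms), with
binary parallel (∧,∨), choice (⊓,⊔) and sequential (△,▽) connectives;
negation is pushed to atoms (`elit b i` is the atom `i` when `b = true`,
its negation when `b = false`). -/
inductive Fml10 where
  | top : Fml10
  | bot : Fml10
  | elit : Bool → ℕ → Fml10
  | pand : Fml10 → Fml10 → Fml10
  | por  : Fml10 → Fml10 → Fml10
  | cand : Fml10 → Fml10 → Fml10
  | cor  : Fml10 → Fml10 → Fml10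
  | sand : Fml10 → Fml10 → Fml10
  | sor  : Fml10 → Fml10 → Fml10
deriving DecidableEq

namespace Fml10

/-- Surface replacement of one occurrence of `G` by `G'` (not in the scope of
a choice connective, not in the tail of a sequential subformula). -/
inductive SRepl (G G' : Fml10) : Fml10 → Fml10 → Prop where
  | here : SRepl G G' G G'
  | pandL {A A' B} : SRepl G G' A A' → SRepl G G' (pand A B) (pand A' B)
  | pandR {A B B'} : SRepl G G' B B' → SRepl G G' (pand A B) (pand A B')
  | porL {A A' B} : SRepl G G' A A' → SRepl G G' (por A B) (por A' B)
  | porR {A B B'} : SRepl G G' B B' → SRepl G G' (por A B) (por A B')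
  | sandL {A A' B} : SRepl G G' A A' → SRepl G G' (sand A B) (sand A' B)
  | sorL {A A' B} : SRepl G G' A A' → SRepl G G' (sor A B) (sor A' B)

/-- Classical evaluation of the elementarization: sequential subformulas
contribute their head, surface ⊓-subformulas are ⊤, surface ⊔-subformulas
are ⊥. -/
def eval (v : ℕ → Bool) : Fml10 → Bool
  | top => true
  | bot => false
  | elit b i => if b then v i else !(v i)
  | pand A B => eval v A && eval v B
  | por A B => eval v A || eval v B
  | cand _ _ => true
  | cor _ _ => false
  | sand A _ => eval v A
  | sor A _ => eval v A

/-- Stability: the elementarization is a classical tautology. -/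
def Stable (F : Fml10) : Prop := ∀ v : ℕ → Bool, eval v F = true

end Fml10

open Fml10

/-- The proof system CL10 (the elementary-base fragment of CL9: the rules
Wait, Choose and Switch). -/
inductive CL10 : Fml10 → Prop where
  | wait (F : Fml10) (hst : Stable F)
      (hcand₁ : ∀ A B H, SRepl (cand A B) A F H → CL10 H)
      (hcand₂ : ∀ A B H, SRepl (cand A B) B F H → CL10 H)
      (hsand : ∀ A B H, SRepl (sand A B) B F H → CL10 H) :
      CL10 F
  | choose {F H : Fml10} (A B : Fml10)
      (h : SRepl (cor A B) A F H ∨ SRepl (cor A B) B F H)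
      (hp : CL10 H) : CL10 F
  | switch {F H : Fml10} (A B : Fml10)
      (h : SRepl (sor A B) B F H)
      (hp : CL10 H) : CL10 F

/-- CL10°-formulas: CL10-formulas in which every sequential subformula
carries an underline mark: in `sand u A B` (resp. `sor u A B`) the underline
is on the head `A` when `u = false`, and within the tail `B` when
`u = true`. -/
inductive HFml where
  | top : HFml
  | bot : HFml
  | elit : Bool → ℕ → HFml
  | pand : HFml → HFml → HFml
  | por  : HFml → HFml → HFml
  | cand : HFml → HFml → HFml
  | cor  : HFml → HFml → HFml
  | sand : Bool → HFml → HFml → HFml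
  | sor  : Bool → HFml → HFml → HFml
deriving DecidableEq

namespace HFml

/-- Replacement of one active surface occurrence of `G` by `G'`: the
occurrence is not in the scope of a choice connective and, whenever it lies
within a component of a sequential subformula, that component is the
underlined one. -/
inductive HRepl (G G' : HFml) : HFml → HFml → Prop where
  | here : HRepl G G' G G'
  | pandL {A A' B} : HRepl G G' A A' → HRepl G G' (pand A B) (pand A' B)
  | pandR {A B B'} : HRepl G G' B B' → HRepl G G' (pand A B) (pand A B')
  | porL {A A' B} : HRepl G G' A A' → HRepl G G' (por A B) (por A' B)
  | porR {A B B'} : HRepl G G' B B' → HRepl G G' (por A B) (por A B')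
  | sandHead {A A' B} : HRepl G G' A A' → HRepl G G' (sand false A B) (sand false A' B)
  | sandTail {A B B'} : HRepl G G' B B' → HRepl G G' (sand true A B) (sand true A B')
  | sorHead {A A' B} : HRepl G G' A A' → HRepl G G' (sor false A B) (sor false A' B)
  | sorTail {A B B'} : HRepl G G' B B' → HRepl G G' (sor true A B) (sor true A B')

/-- Classical evaluation of the elementarization of a CL10°-formula: each
sequential subformula contributes its underlined component, surface ⊓ is ⊤,
surface ⊔ is ⊥. -/
def eval (v : ℕ → Bool) : HFml → Bool
  | top => true
  | bot => false
  | elit b i => if b then v i else !(v i)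
  | pand A B => eval v A && eval v B
  | por A B => eval v A || eval v B
  | cand _ _ => true
  | cor _ _ => false
  | sand u A B => if u then eval v B else eval v A
  | sor u A B => if u then eval v B else eval v A

/-- Stability of a CL10°-formula. -/
def Stable (F : HFml) : Prop := ∀ v : ℕ → Bool, eval v F = true

end HFml

open HFml

/-- The proof system CL10°: Wait° (stable conclusion; premises replace active
surface ⊓-subformulas by each conjunct and advance the underline in active
surface △-subformulas), Choose° (pick a disjunct of an active surface
⊔-subformula) and Switch° (advance the underline in an active surface
▽-subformula). -/
inductive CL10h : HFml → Prop where
  | wait (F : HFml) (hst : HFml.Stable F)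
      (hcand₁ : ∀ A B H, HRepl (HFml.cand A B) A F H → CL10h H)
      (hcand₂ : ∀ A B H, HRepl (HFml.cand A B) B F H → CL10h H)
      (hsand : ∀ A B H, HRepl (HFml.sand false A B) (HFml.sand true A B) F H → CL10h H) :
      CL10h F
  | choose {F H : HFml} (A B : HFml)
      (h : HRepl (HFml.cor A B) A F H ∨ HRepl (HFml.cor A B) B F H)
      (hp : CL10h H) : CL10h F
  | switch {F H : HFml} (A B : HFml)
      (h : HRepl (HFml.sor false A B) (HFml.sor true A B) F H)
      (hp : CL10h H) : CL10h F

/-- The dual proof system CL10°-bar: Wait°-bar (instable conclusion; premises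
replace active surface ⊔-subformulas by each disjunct and advance the
underline in active surface ▽-subformulas), Choose°-bar (pick a conjunct of
an active surface ⊓-subformula) and Switch°-bar (advance the underline in an
active surface △-subformula). -/
inductive CL10hbar : HFml → Prop where
  | wait (F : HFml) (hst : ¬ HFml.Stable F)
      (hcor₁ : ∀ A B H, HRepl (HFml.cor A B) A F H → CL10hbar H)
      (hcor₂ : ∀ A B H, HRepl (HFml.cor A B) B F H → CL10hbar H)
      (hsor : ∀ A B H, HRepl (HFml.sor false A B) (HFml.sor true A B) F H → CL10hbar H) :
      CL10hbar F
  | choose {F H : HFml} (A B : HFml)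
      (h : HRepl (HFml.cand A B) A F H ∨ HRepl (HFml.cand A B) B F H)
      (hp : CL10hbar H) : CL10hbar F
  | switch {F H : HFml} (A B : HFml)
      (h : HRepl (HFml.sand false A B) (HFml.sand true A B) F H)
      (hp : CL10hbar H) : CL10hbar F

/-- Reading a CL10-formula as a CL10°-formula by underlining the head of
every sequential subformula. -/
def embed : Fml10 → HFml
  | Fml10.top => HFml.top
  | Fml10.bot => HFml.bot
  | Fml10.elit b i => HFml.elit b i
  | Fml10.pand A B => HFml.pand (embed A) (embed B)
  | Fml10.por A B => HFml.por (embed A) (embed B)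
  | Fml10.cand A B => HFml.cand (embed A) (embed B)
  | Fml10.cor A B => HFml.cor (embed A) (embed B)
  | Fml10.sand A B => HFml.sand false (embed A) (embed B)
  | Fml10.sor A B => HFml.sor false (embed A) (embed B)


namespace Stmt13Aux

open HFml

/-! ### Size measure -/

def sz : HFml → ℕ
  | .top => 0
  | .bot => 0
  | .elit _ _ => 0
  | .pand A B => sz A + sz B
  | .por A B => sz A + sz B
  | .cand A B => sz A + sz B + 1
  | .cor A B => sz A + sz B + 1
  | .sand u A B => sz A + sz B + (if u then 1 else 2)
  | .sor u A B => sz A + sz B + (if u then 1 else 2)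

lemma hrepl_sz {G G' F H : HFml} (h : HRepl G G' F H) :
    sz H + sz G = sz F + sz G' := by
  induction h <;> (try simp only [sz] at *) <;> omega

/-! ### Inert equivalence: equality everywhere except heads of already
switched sequential subformulas. -/

inductive IEq : HFml → HFml → Prop
  | top : IEq .top .top
  | bot : IEq .bot .bot
  | elit (b i) : IEq (.elit b i) (.elit b i)
  | pand {A A' B B'} : IEq A A' → IEq B B' → IEq (.pand A B) (.pand A' B')
  | por {A A' B B'} : IEq A A' → IEq B B' → IEq (.por A B) (.por A' B')
  | cand {A A' B B'} : IEq A A' → IEq B B' → IEq (.cand A B) (.cand A' B')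
  | cor {A A' B B'} : IEq A A' → IEq B B' → IEq (.cor A B) (.cor A' B')
  | sandF {A A' B B'} : IEq A A' → IEq B B' → IEq (.sand false A B) (.sand false A' B')
  | sandT {A A' B B'} : IEq B B' → IEq (.sand true A B) (.sand true A' B')
  | sorF {A A' B B'} : IEq A A' → IEq B B' → IEq (.sor false A B) (.sor false A' B')
  | sorT {A A' B B'} : IEq B B' → IEq (.sor true A B) (.sor true A' B')

lemma IEq.refl : ∀ F : HFml, IEq F F
  | .top => .top
  | .bot => .bot
  | .elit b i => .elit b i
  | .pand A B => .pand (IEq.refl A) (IEq.refl B)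
  | .por A B => .por (IEq.refl A) (IEq.refl B)
  | .cand A B => .cand (IEq.refl A) (IEq.refl B)
  | .cor A B => .cor (IEq.refl A) (IEq.refl B)
  | .sand false A B => .sandF (IEq.refl A) (IEq.refl B)
  | .sand true A B => .sandT (IEq.refl B)
  | .sor false A B => .sorF (IEq.refl A) (IEq.refl B)
  | .sor true A B => .sorT (IEq.refl B)

lemma IEq.symm {F F' : HFml} (h : IEq F F') : IEq F' F := by
  induction h <;> constructor <;> assumption

lemma IEq.eval_eq {F F' : HFml} (h : IEq F F') (v : ℕ → Bool) :
    eval v F = eval v F' := by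
  induction h <;> simp [HFml.eval, *]

/-! ### Transport of replacements along IEq -/

lemma transport {pat res : HFml → HFml → HFml}
    (hpat : ∀ A B X, IEq (pat A B) X → ∃ A' B', X = pat A' B' ∧ IEq A A' ∧ IEq B B')
    (hres : ∀ {A A' B B'}, IEq A A' → IEq B B' → IEq (res A B) (res A' B'))
    {A B F H F' : HFml} (h : HRepl (pat A B) (res A B) F H) (e : IEq F F') :
    ∃ A' B' H', HRepl (pat A' B') (res A' B') F' H' ∧ IEq H H' := by
  induction h generalizing F' with
  | here =>
    obtain ⟨A', B', rfl, ha, hb⟩ := hpat _ _ _ e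
    exact ⟨A', B', _, .here, hres ha hb⟩
  | pandL h ih =>
    cases e with | pand ea eb =>
      obtain ⟨A', B', H', h', e'⟩ := ih ea
      exact ⟨A', B', _, .pandL h', .pand e' eb⟩
  | pandR h ih =>
    cases e with | pand ea eb =>
      obtain ⟨A', B', H', h', e'⟩ := ih eb
      exact ⟨A', B', _, .pandR h', .pand ea e'⟩
  | porL h ih =>
    cases e with | por ea eb =>
      obtain ⟨A', B', H', h', e'⟩ := ih ea
      exact ⟨A', B', _, .porL h', .por e' eb⟩
  | porR h ih =>
    cases e with | por ea eb =>
      obtain ⟨A', B', H', h', e'⟩ := ih eb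
      exact ⟨A', B', _, .porR h', .por ea e'⟩
  | sandHead h ih =>
    cases e with | sandF ea eb =>
      obtain ⟨A', B', H', h', e'⟩ := ih ea
      exact ⟨A', B', _, .sandHead h', .sandF e' eb⟩
  | sandTail h ih =>
    cases e with | sandT eb =>
      obtain ⟨A', B', H', h', e'⟩ := ih eb
      exact ⟨A', B', _, .sandTail h', .sandT e'⟩
  | sorHead h ih =>
    cases e with | sorF ea eb =>
      obtain ⟨A', B', H', h', e'⟩ := ih ea
      exact ⟨A', B', _, .sorHead h', .sorF e' eb⟩
  | sorTail h ih =>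
    cases e with | sorT eb =>
      obtain ⟨A', B', H', h', e'⟩ := ih eb
      exact ⟨A', B', _, .sorTail h', .sorT e'⟩

lemma hpat_cand : ∀ A B X, IEq (HFml.cand A B) X →
    ∃ A' B', X = HFml.cand A' B' ∧ IEq A A' ∧ IEq B B' := by
  intro A B X h; cases h with | cand ha hb => exact ⟨_, _, rfl, ha, hb⟩

lemma hpat_cor : ∀ A B X, IEq (HFml.cor A B) X →
    ∃ A' B', X = HFml.cor A' B' ∧ IEq A A' ∧ IEq B B' := by
  intro A B X h; cases h with | cor ha hb => exact ⟨_, _, rfl, ha, hb⟩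

lemma hpat_sand : ∀ A B X, IEq (HFml.sand false A B) X →
    ∃ A' B', X = HFml.sand false A' B' ∧ IEq A A' ∧ IEq B B' := by
  intro A B X h; cases h with | sandF ha hb => exact ⟨_, _, rfl, ha, hb⟩

lemma hpat_sor : ∀ A B X, IEq (HFml.sor false A B) X →
    ∃ A' B', X = HFml.sor false A' B' ∧ IEq A A' ∧ IEq B B' := by
  intro A B X h; cases h with | sorF ha hb => exact ⟨_, _, rfl, ha, hb⟩

/-! ### IEq-invariance of provability -/

lemma e_lem {F : HFml} (h : CL10h F) : ∀ {F'}, IEq F F' → CL10h F' := by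
  induction h with
  | wait F hst hc1 hc2 hs ih1 ih2 ih3 =>
    intro F' e
    refine CL10h.wait F' (fun v => by rw [← e.eval_eq v]; exact hst v) ?_ ?_ ?_
    · intro A B H h'
      obtain ⟨A₀, B₀, H₀, h₀, e₀⟩ := transport (res := fun A _ => A) hpat_cand (fun ha _ => ha) h' e.symm
      exact ih1 A₀ B₀ H₀ h₀ e₀.symm
    · intro A B H h'
      obtain ⟨A₀, B₀, H₀, h₀, e₀⟩ := transport (res := fun _ B => B) hpat_cand (fun _ hb => hb) h' e.symm
      exact ih2 A₀ B₀ H₀ h₀ e₀.symm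
    · intro A B H h'
      obtain ⟨A₀, B₀, H₀, h₀, e₀⟩ :=
        transport (res := fun A B => HFml.sand true A B) hpat_sand (fun ha hb => IEq.sandT hb) h' e.symm
      exact ih3 A₀ B₀ H₀ h₀ e₀.symm
  | choose A B h hp ih =>
    intro F' e
    rcases h with h | h
    · obtain ⟨A', B', H', h', e'⟩ := transport (res := fun A _ => A) hpat_cor (fun ha _ => ha) h e
      exact CL10h.choose A' B' (Or.inl h') (ih e')
    · obtain ⟨A', B', H', h', e'⟩ := transport (res := fun _ B => B) hpat_cor (fun _ hb => hb) h e
      exact CL10h.choose A' B' (Or.inr h') (ih e')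
  | switch A B h hp ih =>
    intro F' e
    obtain ⟨A', B', H', h', e'⟩ :=
      transport (res := fun A B => HFml.sor true A B) hpat_sor (fun ha hb => IEq.sorT hb) h e
    exact CL10h.switch A' B' h' (ih e')

lemma ebar_lem {F : HFml} (h : CL10hbar F) : ∀ {F'}, IEq F F' → CL10hbar F' := by
  induction h with
  | wait F hst hc1 hc2 hs ih1 ih2 ih3 =>
    intro F' e
    refine CL10hbar.wait F' (fun hst' => hst (fun v => by rw [e.eval_eq v]; exact hst' v)) ?_ ?_ ?_
    · intro A B H h'
      obtain ⟨A₀, B₀, H₀, h₀, e₀⟩ := transport (res := fun A _ => A) hpat_cor (fun ha _ => ha) h' e.symm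
      exact ih1 A₀ B₀ H₀ h₀ e₀.symm
    · intro A B H h'
      obtain ⟨A₀, B₀, H₀, h₀, e₀⟩ := transport (res := fun _ B => B) hpat_cor (fun _ hb => hb) h' e.symm
      exact ih2 A₀ B₀ H₀ h₀ e₀.symm
    · intro A B H h'
      obtain ⟨A₀, B₀, H₀, h₀, e₀⟩ :=
        transport (res := fun A B => HFml.sor true A B) hpat_sor (fun ha hb => IEq.sorT hb) h' e.symm
      exact ih3 A₀ B₀ H₀ h₀ e₀.symm
  | choose A B h hp ih =>
    intro F' e
    rcases h with h | h
    · obtain ⟨A', B', H', h', e'⟩ := transport (res := fun A _ => A) hpat_cand (fun ha _ => ha) h e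
      exact CL10hbar.choose A' B' (Or.inl h') (ih e')
    · obtain ⟨A', B', H', h', e'⟩ := transport (res := fun _ B => B) hpat_cand (fun _ hb => hb) h e
      exact CL10hbar.choose A' B' (Or.inr h') (ih e')
  | switch A B h hp ih =>
    intro F' e
    obtain ⟨A', B', H', h', e'⟩ :=
      transport (res := fun A B => HFml.sand true A B) hpat_sand (fun ha hb => IEq.sandT hb) h e
    exact CL10hbar.switch A' B' h' (ih e')

end Stmt13Aux

namespace Stmt13Aux

open HFml

/-! ### Moves -/

def ProPat (G G' : HFml) : Prop :=
  (∃ A B, G = HFml.cor A B ∧ (G' = A ∨ G' = B)) ∨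
  (∃ A B, G = HFml.sor false A B ∧ G' = HFml.sor true A B)

def OppPat (G G' : HFml) : Prop :=
  (∃ A B, G = HFml.cand A B ∧ (G' = A ∨ G' = B)) ∨
  (∃ A B, G = HFml.sand false A B ∧ G' = HFml.sand true A B)

def Pro (F H : HFml) : Prop := ∃ G G', ProPat G G' ∧ HRepl G G' F H
def Opp (F H : HFml) : Prop := ∃ G G', OppPat G G' ∧ HRepl G G' F H

lemma Pro.lift {c : HFml → HFml}
    (hc : ∀ {G G' X Y}, HRepl G G' X Y → HRepl G G' (c X) (c Y))
    {X Y} (h : Pro X Y) : Pro (c X) (c Y) := by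
  obtain ⟨G, G', hp, hr⟩ := h; exact ⟨G, G', hp, hc hr⟩

lemma Opp.lift {c : HFml → HFml}
    (hc : ∀ {G G' X Y}, HRepl G G' X Y → HRepl G G' (c X) (c Y))
    {X Y} (h : Opp X Y) : Opp (c X) (c Y) := by
  obtain ⟨G, G', hp, hr⟩ := h; exact ⟨G, G', hp, hc hr⟩

/-- Conclusion of the commuting lemma. -/
def Concl (H₁ H₂ : HFml) : Prop :=
  (∃ K, Opp H₁ K ∧ Pro H₂ K) ∨ (∃ K, Opp H₁ K ∧ IEq H₂ K) ∨
  (∃ K, Pro H₂ K ∧ IEq H₁ K)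

lemma Concl.lift {c : HFml → HFml}
    (hc : ∀ {G G' X Y}, HRepl G G' X Y → HRepl G G' (c X) (c Y))
    (he : ∀ {X Y}, IEq X Y → IEq (c X) (c Y))
    {X Y} (h : Concl X Y) : Concl (c X) (c Y) := by
  rcases h with ⟨K, o, p⟩ | ⟨K, o, e⟩ | ⟨K, p, e⟩
  · exact Or.inl ⟨c K, o.lift hc, p.lift hc⟩
  · exact Or.inr (Or.inl ⟨c K, o.lift hc, he e⟩)
  · exact Or.inr (Or.inr ⟨c K, p.lift hc, he e⟩)

/-- The commuting lemma: a proponent move and an opponent move applied to the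
same formula. -/
lemma com {G₁ G₁' G₂ G₂' F H₁ H₂ : HFml} (p₁ : ProPat G₁ G₁') (p₂ : OppPat G₂ G₂')
    (h₁ : HRepl G₁ G₁' F H₁) (h₂ : HRepl G₂ G₂' F H₂) : Concl H₁ H₂ := by
  induction h₁ generalizing H₂ with
  | here =>
    rcases p₁ with ⟨A, B, rfl, hr⟩ | ⟨A, B, rfl, rfl⟩
    · -- G₁ = cor A B : the opponent move cannot be inside it
      cases h₂ with
      | here => rcases p₂ with ⟨C,D,h,_⟩|⟨C,D,h,_⟩ <;> simp at h
    · -- G₁ = sor false A B, H₁ = sor true A B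
      cases h₂ with
      | here => rcases p₂ with ⟨C,D,h,_⟩|⟨C,D,h,_⟩ <;> simp at h
      | @sorHead _ A'' _ h₂' =>
        refine Or.inr (Or.inr ⟨HFml.sor true A'' B, ?_, IEq.sorT (IEq.refl B)⟩)
        exact ⟨_, _, Or.inr ⟨A'', B, rfl, rfl⟩, .here⟩
  | pandL h₁' ih =>
    cases h₂ with
    | here => rcases p₂ with ⟨C,D,h,_⟩|⟨C,D,h,_⟩ <;> simp at h
    | pandL h₂' =>
      exact (ih h₂').lift (fun h => .pandL h) (fun e => IEq.pand e (IEq.refl _))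
    | pandR h₂' =>
      exact Or.inl ⟨_, ⟨_, _, p₂, .pandR h₂'⟩, ⟨_, _, p₁, .pandL h₁'⟩⟩
  | pandR h₁' ih =>
    cases h₂ with
    | here => rcases p₂ with ⟨C,D,h,_⟩|⟨C,D,h,_⟩ <;> simp at h
    | pandR h₂' =>
      exact (ih h₂').lift (fun h => .pandR h) (fun e => IEq.pand (IEq.refl _) e)
    | pandL h₂' =>
      exact Or.inl ⟨_, ⟨_, _, p₂, .pandL h₂'⟩, ⟨_, _, p₁, .pandR h₁'⟩⟩
  | porL h₁' ih =>
    cases h₂ with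
    | here => rcases p₂ with ⟨C,D,h,_⟩|⟨C,D,h,_⟩ <;> simp at h
    | porL h₂' =>
      exact (ih h₂').lift (fun h => .porL h) (fun e => IEq.por e (IEq.refl _))
    | porR h₂' =>
      exact Or.inl ⟨_, ⟨_, _, p₂, .porR h₂'⟩, ⟨_, _, p₁, .porL h₁'⟩⟩
  | porR h₁' ih =>
    cases h₂ with
    | here => rcases p₂ with ⟨C,D,h,_⟩|⟨C,D,h,_⟩ <;> simp at h
    | porR h₂' =>
      exact (ih h₂').lift (fun h => .porR h) (fun e => IEq.por (IEq.refl _) e)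
    | porL h₂' =>
      exact Or.inl ⟨_, ⟨_, _, p₂, .porL h₂'⟩, ⟨_, _, p₁, .porR h₁'⟩⟩
  | @sandHead A A' B h₁' ih =>
    -- proponent move inside the head of sand false A B
    cases h₂ with
    | here =>
      -- the opponent occurrence is this very sand false A B : a switch
      have hG : G₂' = HFml.sand true A B := by
        rcases p₂ with ⟨C, D, h, _⟩ | ⟨C, D, h, h'⟩
        · exact absurd h (by simp)
        · cases h; exact h'
      subst hG
      refine Or.inr (Or.inl ⟨HFml.sand true A' B, ?_, IEq.sandT (IEq.refl B)⟩)
      exact ⟨_, _, Or.inr ⟨_, _, rfl, rfl⟩, .here⟩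
    | sandHead h₂' =>
      exact (ih h₂').lift (fun h => .sandHead h) (fun e => IEq.sandF e (IEq.refl _))
  | sandTail h₁' ih =>
    cases h₂ with
    | here => rcases p₂ with ⟨C,D,h,_⟩|⟨C,D,h,_⟩ <;> simp at h
    | sandTail h₂' =>
      exact (ih h₂').lift (fun h => .sandTail h) (fun e => IEq.sandT e)
  | sorHead h₁' ih =>
    cases h₂ with
    | here => rcases p₂ with ⟨C,D,h,_⟩|⟨C,D,h,_⟩ <;> simp at h
    | sorHead h₂' =>
      exact (ih h₂').lift (fun h => .sorHead h) (fun e => IEq.sorF e (IEq.refl _))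
  | sorTail h₁' ih =>
    cases h₂ with
    | here => rcases p₂ with ⟨C,D,h,_⟩|⟨C,D,h,_⟩ <;> simp at h
    | sorTail h₂' =>
      exact (ih h₂').lift (fun h => .sorTail h) (fun e => IEq.sorT e)

/-! ### Closure lemmas -/

lemma pro_step {F H : HFml} (h : Pro F H) (hp : CL10h H) : CL10h F := by
  obtain ⟨G, G', hp', hr⟩ := h
  rcases hp' with ⟨A, B, rfl, rfl | rfl⟩ | ⟨A, B, rfl, rfl⟩
  · exact CL10h.choose _ _ (Or.inl hr) hp
  · exact CL10h.choose _ _ (Or.inr hr) hp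
  · exact CL10h.switch _ _ hr hp

lemma opp_step {F H : HFml} (h : Opp F H) (hp : CL10hbar H) : CL10hbar F := by
  obtain ⟨G, G', hp', hr⟩ := h
  rcases hp' with ⟨A, B, rfl, rfl | rfl⟩ | ⟨A, B, rfl, rfl⟩
  · exact CL10hbar.choose _ _ (Or.inl hr) hp
  · exact CL10hbar.choose _ _ (Or.inr hr) hp
  · exact CL10hbar.switch _ _ hr hp

lemma m_aux {F H' H G₁ G₁' : HFml} (p₁ : ProPat G₁ G₁') (h₁ : HRepl G₁ G₁' F H')
    (hp : CL10h H') (ih : ∀ {K}, Opp H' K → CL10h K) (ho : Opp F H) : CL10h H := by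
  obtain ⟨G₂, G₂', p₂, h₂⟩ := ho
  rcases com p₁ p₂ h₁ h₂ with ⟨K, o, p⟩ | ⟨K, o, e⟩ | ⟨K, p, e⟩
  · exact pro_step p (ih o)
  · exact e_lem (ih o) e.symm
  · exact pro_step p (e_lem hp e)

lemma mbar_aux {F H' H G₂ G₂' : HFml} (p₂ : OppPat G₂ G₂') (h₂ : HRepl G₂ G₂' F H')
    (hp : CL10hbar H') (ih : ∀ {K}, Pro H' K → CL10hbar K) (hpro : Pro F H) :
    CL10hbar H := by
  obtain ⟨G₁, G₁', p₁, h₁⟩ := hpro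
  rcases com p₁ p₂ h₁ h₂ with ⟨K, o, p⟩ | ⟨K, o, e⟩ | ⟨K, p, e⟩
  · exact opp_step o (ih p)
  · exact opp_step o (ebar_lem hp e)
  · exact ebar_lem (ih p) e.symm

/-- CL10h proofs are closed under opponent moves. -/
lemma m_lem {F : HFml} (h : CL10h F) : ∀ {H}, Opp F H → CL10h H := by
  induction h with
  | wait F hst hc1 hc2 hs ih1 ih2 ih3 =>
    intro H ho
    obtain ⟨G, G', hp, hr⟩ := ho
    rcases hp with ⟨A, B, rfl, rfl | rfl⟩ | ⟨A, B, rfl, rfl⟩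
    · exact hc1 _ _ _ hr
    · exact hc2 _ _ _ hr
    · exact hs _ _ _ hr
  | @choose F H' A B h hp ih =>
    intro H ho
    rcases h with h | h
    · exact m_aux (Or.inl ⟨A, B, rfl, Or.inl rfl⟩) h hp (fun {K} o => ih o) ho
    · exact m_aux (Or.inl ⟨A, B, rfl, Or.inr rfl⟩) h hp (fun {K} o => ih o) ho
  | @switch F H' A B h hp ih =>
    intro H ho
    exact m_aux (Or.inr ⟨A, B, rfl, rfl⟩) h hp (fun {K} o => ih o) ho

/-- CL10hbar proofs are closed under proponent moves. -/
lemma mbar_lem {F : HFml} (h : CL10hbar F) : ∀ {H}, Pro F H → CL10hbar H := by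
  induction h with
  | wait F hst hc1 hc2 hs ih1 ih2 ih3 =>
    intro H ho
    obtain ⟨G, G', hp, hr⟩ := ho
    rcases hp with ⟨A, B, rfl, rfl | rfl⟩ | ⟨A, B, rfl, rfl⟩
    · exact hc1 _ _ _ hr
    · exact hc2 _ _ _ hr
    · exact hs _ _ _ hr
  | @choose F H' A B h hp ih =>
    intro H ho
    rcases h with h | h
    · exact mbar_aux (Or.inl ⟨A, B, rfl, Or.inl rfl⟩) h hp (fun {K} o => ih o) ho
    · exact mbar_aux (Or.inl ⟨A, B, rfl, Or.inr rfl⟩) h hp (fun {K} o => ih o) ho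
  | @switch F H' A B h hp ih =>
    intro H ho
    exact mbar_aux (Or.inr ⟨A, B, rfl, rfl⟩) h hp (fun {K} o => ih o) ho

lemma Opp.sz_lt {F H : HFml} (h : Opp F H) : sz H < sz F := by
  obtain ⟨G, G', hp, hr⟩ := h
  have hsz := hrepl_sz hr
  rcases hp with ⟨A, B, rfl, rfl | rfl⟩ | ⟨A, B, rfl, rfl⟩ <;>
    simp [sz] at hsz <;> omega

lemma Pro.sz_lt {F H : HFml} (h : Pro F H) : sz H < sz F := by
  obtain ⟨G, G', hp, hr⟩ := h
  have hsz := hrepl_sz hr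
  rcases hp with ⟨A, B, rfl, rfl | rfl⟩ | ⟨A, B, rfl, rfl⟩ <;>
    simp [sz] at hsz <;> omega

end Stmt13Aux

open Stmt13Aux

/-- For any CL10°-formula F, F is not provable in CL10° iff F
is provable in the dual system CL10°-bar. -/
theorem stmt13 (F : HFml) : ¬ CL10h F ↔ CL10hbar F := by
  suffices h : ∀ n (F : HFml), sz F ≤ n →
      ((¬ CL10h F → CL10hbar F) ∧ (CL10hbar F → ¬ CL10h F)) by
    obtain ⟨h1, h2⟩ := h (sz F) F le_rfl
    exact ⟨h1, h2⟩
  intro n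
  induction n using Nat.strong_induction_on with
  | _ n ih =>
    intro F hszF
    have IH : ∀ H : HFml, sz H < sz F →
        ((¬ CL10h H → CL10hbar H) ∧ (CL10hbar H → ¬ CL10h H)) := by
      intro H hlt
      exact ih (sz H) (lt_of_lt_of_le hlt hszF) H le_rfl
    constructor
    · -- ¬ CL10h F → CL10hbar F
      intro hnp
      by_cases hst : HFml.Stable F
      ·
        by_cases h1 : ∀ A B H, HRepl (HFml.cand A B) A F H → CL10h H
        · by_cases h2 : ∀ A B H, HRepl (HFml.cand A B) B F H → CL10h H
          · by_cases h3 : ∀ A B H,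
                HRepl (HFml.sand false A B) (HFml.sand true A B) F H → CL10h H
            · exact absurd (CL10h.wait F hst h1 h2 h3) hnp
            · push_neg at h3
              obtain ⟨A, B, H, hr, hH⟩ := h3
              have ho : Opp F H := ⟨_, _, Or.inr ⟨A, B, rfl, rfl⟩, hr⟩
              exact CL10hbar.switch A B hr ((IH H ho.sz_lt).1 hH)
          · push_neg at h2
            obtain ⟨A, B, H, hr, hH⟩ := h2
            have ho : Opp F H := ⟨_, _, Or.inl ⟨A, B, rfl, Or.inr rfl⟩, hr⟩
            exact CL10hbar.choose A B (Or.inr hr) ((IH H ho.sz_lt).1 hH)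
        · push_neg at h1
          obtain ⟨A, B, H, hr, hH⟩ := h1
          have ho : Opp F H := ⟨_, _, Or.inl ⟨A, B, rfl, Or.inl rfl⟩, hr⟩
          exact CL10hbar.choose A B (Or.inl hr) ((IH H ho.sz_lt).1 hH)
      ·
        refine CL10hbar.wait F hst ?_ ?_ ?_
        · intro A B H hr
          have ho : Pro F H := ⟨_, _, Or.inl ⟨A, B, rfl, Or.inl rfl⟩, hr⟩
          refine (IH H ho.sz_lt).1 fun hH => hnp (CL10h.choose A B (Or.inl hr) hH)
        · intro A B H hr
          have ho : Pro F H := ⟨_, _, Or.inl ⟨A, B, rfl, Or.inr rfl⟩, hr⟩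
          refine (IH H ho.sz_lt).1 fun hH => hnp (CL10h.choose A B (Or.inr hr) hH)
        · intro A B H hr
          have ho : Pro F H := ⟨_, _, Or.inr ⟨A, B, rfl, rfl⟩, hr⟩
          refine (IH H ho.sz_lt).1 fun hH => hnp (CL10h.switch A B hr hH)
    · -- CL10hbar F → ¬ CL10h F
      intro hb hp
      by_cases hst : HFml.Stable F
      · cases hb with
        | wait _ h _ _ _ => exact h hst
        | @choose _ H A B h hpb =>
          have ho : Opp F H := by
            rcases h with h | h
            · exact ⟨_, _, Or.inl ⟨A, B, rfl, Or.inl rfl⟩, h⟩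
            · exact ⟨_, _, Or.inl ⟨A, B, rfl, Or.inr rfl⟩, h⟩
          exact (IH _ ho.sz_lt).2 hpb (m_lem hp ho)
        | @switch _ H A B h hpb =>
          have ho : Opp F H := ⟨_, _, Or.inr ⟨A, B, rfl, rfl⟩, h⟩
          exact (IH _ ho.sz_lt).2 hpb (m_lem hp ho)
      · cases hp with
        | wait _ h _ _ _ => exact hst h
        | @choose _ H A B h hpp =>
          have ho : Pro F H := by
            rcases h with h | h
            · exact ⟨_, _, Or.inl ⟨A, B, rfl, Or.inl rfl⟩, h⟩
            · exact ⟨_, _, Or.inl ⟨A, B, rfl, Or.inr rfl⟩, h⟩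
          exact (IH _ ho.sz_lt).2 (mbar_lem hb ho) hpp
        | @switch _ H A B h hpp =>
          have ho : Pro F H := ⟨_, _, Or.inr ⟨A, B, rfl, rfl⟩, h⟩
          exact (IH _ ho.sz_lt).2 (mbar_lem hb ho) hpp
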